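/- arXiv:math/0412248 — 6 statements merged into one kernel-verified Lean document; each statement's English description precedes it below -/
import Mathlib

section
/- The group π = S_3 *_{Z/2Z} S_3 is indecomposable as a free product: if π ≅ G * H for groups G and H, then G or H is trivial. -/
open Monoid

/-- The relators a², abab⁻², acac⁻² in the free group on three generators a, b, c;
the presented group is S₃ *_{Z/2Z} S₃. -/
def piRels : Set (FreeGroup (Fin 3)) :=
  {(FreeGroup.of 0) ^ 2,
   FreeGroup.of 0 * FreeGroup.of 1 * FreeGroup.of 0 * (FreeGroup.of 1)⁻¹ * (FreeGroup.of 1)⁻¹,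
   FreeGroup.of 0 * FreeGroup.of 2 * FreeGroup.of 0 * (FreeGroup.of 2)⁻¹ * (FreeGroup.of 2)⁻¹}

/-- π = S₃ *_{Z/2Z} S₃ = ⟨a, b, c ∣ a², abab⁻², acac⁻²⟩. -/
abbrev piGroup := PresentedGroup piRels

/-!
A torsion element of a free product is conjugate into a factor: a reduced word whose first and
last letters lie in different factors has infinite order, and otherwise conjugating by the first
letter shortens the word. Refining this, if `g ≠ 1` lies in a factor `G i` and both `x` and
`of g * x` have finite order, then `x` lies in `G i` itself.

In `π`, the generator `a` is a nontrivial involution, and each generator `s ∈ {a, b, c}` as well as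
`a * s` has finite order (`b³ = c³ = (ab)² = (ac)² = 1`). Given `π ≅ G * H`, conjugate so that
`a` lies in one factor; then so do `b` and `c`, hence all of `π`, and the other factor is trivial.
-/

theorem isOfFinOrder_conj_iff {Γ : Type*} [Group Γ] (u x : Γ) :
    IsOfFinOrder (u * x * u⁻¹) ↔ IsOfFinOrder x := by
  rw [← orderOf_pos_iff, ← orderOf_pos_iff, ← MulEquiv.orderOf_eq (MulAut.conj u) x,
    MulAut.conj_apply]

namespace Monoid.CoprodI

section Monoid

variable {ι : Type*} {M : ι → Type*} [∀ i, Monoid (M i)]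

namespace Word

def lastIdx (w : Word M) : Option ι :=
  w.toList.getLast?.map Sigma.fst

theorem prod_injective : Function.Injective (prod : Word M → CoprodI M) := by
  classical
  exact equiv.symm.injective

theorem prod_surjective : Function.Surjective (prod : Word M → CoprodI M) := by
  classical
  exact equiv.symm.surjective

end Word

namespace NeWord

theorem prod_ne_one {i j : ι} (w : NeWord M i j) : w.prod ≠ 1 := fun h =>
  w.toList_ne_nil <| congrArg Word.toList <| Word.prod_injective (h.trans Word.prod_empty.symm)

theorem exists_prod_eq_pow_succ {i j : ι} (w : NeWord M i j) (hij : i ≠ j) (n : ℕ) :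
    ∃ v : NeWord M i j, v.prod = w.prod ^ (n + 1) := by
  induction n with
  | zero => exact ⟨w, (pow_one _).symm⟩
  | succ n ih =>
    obtain ⟨v, hv⟩ := ih
    exact ⟨append w hij.symm v, by rw [append_prod, hv, pow_succ' _ (n + 1)]⟩

theorem not_isOfFinOrder_prod {i j : ι} (w : NeWord M i j) (hij : i ≠ j) :
    ¬IsOfFinOrder w.prod := by
  rw [isOfFinOrder_iff_pow_eq_one]
  rintro ⟨n, hn, hpow⟩
  obtain ⟨m, rfl⟩ := Nat.exists_eq_add_of_lt hn
  obtain ⟨v, hv⟩ := w.exists_prod_eq_pow_succ hij m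
  exact v.prod_ne_one (hv.trans (by simpa using hpow))

end NeWord

namespace Word

theorem lastIdx_cons {i : ι} (m : M i) (w : Word M) (hmw : w.fstIdx ≠ some i) (h1 : m ≠ 1) :
    (cons m w hmw h1).lastIdx = some (w.lastIdx.getD i) := by
  cases h : w.toList.getLast? <;> simp [lastIdx, List.getLast?_cons, h]

theorem not_isOfFinOrder_prod_of_fstIdx_ne_lastIdx {w : Word M} (h : w.fstIdx ≠ w.lastIdx) :
    ¬IsOfFinOrder w.prod := by
  obtain ⟨i, j, v, rfl⟩ := NeWord.of_word w (by rintro rfl; exact h rfl)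
  have hij : i ≠ j := by
    simpa [fstIdx, lastIdx, NeWord.toWord] using h
  exact v.not_isOfFinOrder_prod hij

end Word

end Monoid

section Group

variable {ι : Type*} {G : ι → Type*} [∀ i, Group (G i)]

namespace Word

theorem prod_mem_range_or_exists_conj_shorter {i : ι} {w : Word G}
    (hfst : w.fstIdx = some i) (hlast : w.lastIdx = some i) :
    w.prod ∈ (of : G i →* CoprodI G).range ∨
      ∃ (t : G i) (v : Word G), v.toList.length < w.toList.length ∧
        w.prod = of t * v.prod * (of t)⁻¹ := by
  obtain ⟨l, hne, hchain⟩ := w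
  rcases l with _ | ⟨⟨j, t⟩, L⟩
  · simp [fstIdx] at hfst
  obtain rfl : i = j := by simpa [fstIdx, eq_comm] using hfst
  rcases L.eq_nil_or_concat with rfl | ⟨mid, ⟨k, t'⟩, hL⟩
  · exact Or.inl ⟨t, by simp [prod]⟩
  rw [List.concat_eq_append] at hL
  subst hL
  obtain rfl : i = k := Eq.symm <| by
    simpa only [lastIdx, ← List.cons_append, List.getLast?_concat, Option.map_some,
      Option.some.injEq] using hlast
  have hmid_ne : ∀ l ∈ mid, l.2 ≠ 1 := fun l hl => hne l (by simp [hl])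
  have hmid_chain := hchain.tail.left_of_append
  have hmid_last : ∀ l ∈ mid.getLast?, l.1 ≠ i := fun l hl =>
    (List.isChain_append.1 hchain.tail).2.2 l hl _ rfl
  have hprod : prod ⟨⟨i, t⟩ :: (mid ++ [⟨i, t'⟩]), hne, hchain⟩ =
      of t * prod ⟨mid, hmid_ne, hmid_chain⟩ * of t' := by
    simp [prod, mul_assoc]
  -- conjugating `t · mid · t'` by `t` gives the reduced word `mid · (t' t)`, or `mid` if `t' t = 1`
  right
  by_cases htt : t' * t = 1
  · refine ⟨t, ⟨mid, hmid_ne, hmid_chain⟩, by simp, ?_⟩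
    rw [hprod, eq_inv_of_mul_eq_one_left (by rw [← map_mul, htt, map_one] : of t' * of t = 1)]
  · refine ⟨t, ⟨mid ++ [⟨i, t' * t⟩], ?_, hmid_chain.append (List.isChain_singleton _) ?_⟩,
      by simp, ?_⟩
    · simp only [List.mem_append, List.mem_singleton]
      rintro l (hl | rfl)
      exacts [hmid_ne l hl, htt]
    · simpa using hmid_last
    · rw [hprod]
      simp [prod, mul_assoc]

theorem exists_conj_of_isOfFinOrder (w : Word G) (hw : IsOfFinOrder w.prod)
    (hw1 : w.prod ≠ 1) : ∃ (i : ι) (g : G i) (u : CoprodI G), w.prod = u * of g * u⁻¹ := by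
  by_cases h : w.fstIdx = w.lastIdx
  swap
  · exact absurd hw (not_isOfFinOrder_prod_of_fstIdx_ne_lastIdx h)
  cases hfst : w.fstIdx with
  | none => exact absurd (by simp_all [fstIdx, prod]) hw1
  | some i =>
    rcases prod_mem_range_or_exists_conj_shorter hfst (h ▸ hfst) with ⟨g, hg⟩ | ⟨t, v, hlen, hv⟩
    · exact ⟨i, g, 1, by simp [hg]⟩
    · rw [hv, isOfFinOrder_conj_iff] at hw
      obtain ⟨k, g, u, hu⟩ :=
        exists_conj_of_isOfFinOrder v hw (by rintro hv1; simp [hv, hv1] at hw1)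
      exact ⟨k, g, of t * u, by rw [hv, hu]; group⟩
termination_by w.toList.length

theorem prod_mem_range_of_isOfFinOrder {i : ι} {g : G i} (hg : g ≠ 1) (w : Word G)
    (hw : IsOfFinOrder w.prod) (hgw : IsOfFinOrder (of g * w.prod)) :
    w.prod ∈ (of : G i →* CoprodI G).range := by
  by_cases h : w.fstIdx = w.lastIdx
  swap
  · exact absurd hw (not_isOfFinOrder_prod_of_fstIdx_ne_lastIdx h)
  cases hfst : w.fstIdx with
  | none =>
    rw [show w.prod = 1 by simp_all [fstIdx, prod]]
    exact one_mem _
  | some j =>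
    by_cases hji : j = i
    · subst hji
      rcases prod_mem_range_or_exists_conj_shorter hfst (h ▸ hfst) with hrange | ⟨t, v, hlen, hv⟩
      · exact hrange
      have hv_fin : IsOfFinOrder v.prod := by rwa [hv, isOfFinOrder_conj_iff] at hw
      have hgv_fin : IsOfFinOrder (of (t⁻¹ * g * t) * v.prod) := by
        have hconj : of (t⁻¹ * g * t) * v.prod = (of t)⁻¹ * (of g * w.prod) * (of t)⁻¹⁻¹ := by
          rw [hv]
          simp only [map_mul, map_inv]
          group
        rwa [hconj, isOfFinOrder_conj_iff]
      have hg' : t⁻¹ * g * t ≠ 1 := by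
        rwa [Ne, mul_assoc, inv_mul_eq_one, eq_comm, mul_eq_right]
      have hv_mem := prod_mem_range_of_isOfFinOrder hg' v hv_fin hgv_fin
      rw [hv]
      exact mul_mem (mul_mem ⟨t, rfl⟩ hv_mem) (inv_mem ⟨t, rfl⟩)
    · have hcons_fst : (cons g w (by simpa [hfst] using hji) hg).fstIdx ≠
          (cons g w (by simpa [hfst] using hji) hg).lastIdx := by
        rw [fstIdx_cons, lastIdx_cons, ← h, hfst]
        simpa using Ne.symm hji
      exact absurd (by simpa using hgw) (not_isOfFinOrder_prod_of_fstIdx_ne_lastIdx hcons_fst)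
termination_by w.toList.length

end Word

theorem subsingleton_of_range_of_eq_top {i j : ι} (hji : j ≠ i)
    (h : (of : G i →* CoprodI G).range = ⊤) : Subsingleton (G j) := by
  classical
  refine ⟨fun x y => ?_⟩
  suffices ∀ x : G j, x = 1 by rw [this x, this y]
  intro x
  obtain ⟨z, hz⟩ : of x ∈ (of : G i →* CoprodI G).range := h ▸ Subgroup.mem_top _
  rw [← of_leftInverse j x, ← hz, lift_of, Pi.mulSingle_eq_of_ne (Ne.symm hji),
    MonoidHom.one_apply]

theorem exists_forall_ne_subsingleton_of_mulEquiv {Γ : Type*} [Group Γ] (e : Γ ≃* CoprodI G)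
    {S : Set Γ} (hS : Subgroup.closure S = ⊤) {p : Γ} (hp : IsOfFinOrder p) (hp1 : p ≠ 1)
    (hSp : ∀ s ∈ S, IsOfFinOrder s ∧ IsOfFinOrder (p * s)) :
    ∃ i, ∀ j ≠ i, Subsingleton (G j) := by
  obtain ⟨w, hw⟩ := Word.prod_surjective (e p)
  obtain ⟨i, g, u, hp_eq⟩ := w.exists_conj_of_isOfFinOrder
    (hw ▸ e.toMonoidHom.isOfFinOrder hp) (hw ▸ e.map_ne_one_iff.2 hp1)
  have hg : g ≠ 1 := by rintro rfl; simp [hp_eq] at hw; exact hp1 (e.map_eq_one_iff.1 hw.symm)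
  have hconj_mem : ∀ s ∈ S, u⁻¹ * e s * u⁻¹⁻¹ ∈ (of : G i →* CoprodI G).range := by
    intro s hs
    obtain ⟨v, hv⟩ := Word.prod_surjective (u⁻¹ * e s * u⁻¹⁻¹)
    have hgv : of g * v.prod = u⁻¹ * e (p * s) * u⁻¹⁻¹ := by
      rw [hv, map_mul, ← hw, hp_eq]; group
    rw [← hv]
    refine v.prod_mem_range_of_isOfFinOrder hg ?_ ?_
    · rw [hv, isOfFinOrder_conj_iff]; exact e.toMonoidHom.isOfFinOrder (hSp s hs).1
    · rw [hgv, isOfFinOrder_conj_iff]; exact e.toMonoidHom.isOfFinOrder (hSp s hs).2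
  have hle : Subgroup.closure S ≤ (of : G i →* CoprodI G).range.comap
      ((MulAut.conj u⁻¹).toMonoidHom.comp e.toMonoidHom) :=
    (Subgroup.closure_le _).2 fun s hs => by simpa [MulAut.conj_apply] using hconj_mem s hs
  refine ⟨i, fun j hji => subsingleton_of_range_of_eq_top hji (eq_top_iff.2 fun x _ => ?_)⟩
  have hx := hle (hS ▸ Subgroup.mem_top (e.symm (u * x * u⁻¹)))
  rwa [Subgroup.mem_comap, MonoidHom.comp_apply, MulEquiv.coe_toMonoidHom,
    MulEquiv.coe_toMonoidHom, MulEquiv.apply_symm_apply, MulAut.conj_apply,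
    show u⁻¹ * (u * x * u⁻¹) * u⁻¹⁻¹ = x by group] at hx

end Group

end Monoid.CoprodI

namespace Monoid.Coprod

universe u v

variable (G : Type u) (H : Type v) [Group G] [Group H]

-- `CoprodI` needs a family in a single universe, hence the `ULift`s.
def summand : Bool → Type (max u v) := fun b => cond b (ULift.{v} G) (ULift.{u} H)

instance : ∀ b, Group (summand G H b)
  | true => inferInstanceAs (Group (ULift G))
  | false => inferInstanceAs (Group (ULift H))

def mulEquivCoprodI : Coprod G H ≃* CoprodI (summand G H) :=
  MonoidHom.toMulEquiv
    (lift ((CoprodI.of (i := true)).comp MulEquiv.ulift.symm.toMonoidHom)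
      ((CoprodI.of (i := false)).comp MulEquiv.ulift.symm.toMonoidHom))
    (CoprodI.lift fun b => Bool.rec
      (inr.comp MulEquiv.ulift.toMonoidHom) (inl.comp MulEquiv.ulift.toMonoidHom) b)
    (by apply hom_ext <;> ext x <;> simp [CoprodI.lift_of] <;> rfl)
    (by
      apply CoprodI.ext_hom
      rintro (_ | _) <;> ext x <;> simp [CoprodI.lift_of] <;> rfl)

variable {G H}

theorem subsingleton_or_subsingleton_of_mulEquiv {Γ : Type*} [Group Γ] (e : Γ ≃* Coprod G H)
    {S : Set Γ} (hS : Subgroup.closure S = ⊤) {p : Γ} (hp : IsOfFinOrder p) (hp1 : p ≠ 1)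
    (hSp : ∀ s ∈ S, IsOfFinOrder s ∧ IsOfFinOrder (p * s)) :
    Subsingleton G ∨ Subsingleton H := by
  obtain ⟨i, hi⟩ := CoprodI.exists_forall_ne_subsingleton_of_mulEquiv
    (e.trans (mulEquivCoprodI G H)) hS hp hp1 hSp
  cases i
  · exact Or.inl (@Equiv.subsingleton _ _ Equiv.ulift.symm (hi true Bool.false_ne_true.symm))
  · exact Or.inr (@Equiv.subsingleton _ _ Equiv.ulift.symm (hi false Bool.false_ne_true))

end Monoid.Coprod

section ConjEqSq

variable {Γ : Type*} [Group Γ] {x y : Γ}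

theorem pow_three_eq_one_of_conj_eq_sq (hx : x ^ 2 = 1) (h : x * y * x⁻¹ = y ^ 2) :
    y ^ 3 = 1 := by
  have hy : y * y ^ 3 = y := calc
    y * y ^ 3 = (x * y * x⁻¹) ^ 2 := by rw [h, ← pow_mul, ← pow_succ']
    _ = x ^ 2 * y * (x ^ 2)⁻¹ := by rw [conj_pow, ← h, sq x]; group
    _ = y := by rw [hx]; group
  rwa [mul_eq_left] at hy

theorem mul_sq_eq_one_of_conj_eq_sq (hx : x ^ 2 = 1) (h : x * y * x⁻¹ = y ^ 2) :
    (x * y) ^ 2 = 1 := calc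
  (x * y) ^ 2 = x * y * x⁻¹ * (x ^ 2 * y) := by rw [sq]; group
  _ = 1 := by rw [h, hx, one_mul, ← pow_succ, pow_three_eq_one_of_conj_eq_sq hx h]

end ConjEqSq

namespace piGroup

open PresentedGroup

theorem of_zero_sq : (of 0 : piGroup) ^ 2 = 1 := by
  rw [of, ← map_pow]
  exact one_of_mem (by simp [piRels])

theorem conj_of_eq_sq {i : Fin 3} (hi : i ≠ 0) :
    of 0 * of i * (of 0)⁻¹ = (of i : piGroup) ^ 2 := by
  have hrel : (of 0 * of i * of 0 * (of i)⁻¹ * (of i)⁻¹ : piGroup) = 1 := by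
    simp only [of, ← map_inv, ← map_mul]
    exact one_of_mem (by fin_cases i <;> simp_all [piRels])
  have hinv : (of 0 : piGroup)⁻¹ = of 0 := inv_eq_of_mul_eq_one_left (by rw [← sq, of_zero_sq])
  rw [hinv, ← mul_inv_eq_one, pow_two, mul_inv_rev, ← mul_assoc, hrel]

theorem of_zero_ne_one : (of 0 : piGroup) ≠ 1 := fun h => by
  let f : piGroup →* Multiplicative (ZMod 2) :=
    toGroup (f := ![Multiplicative.ofAdd 1, 1, 1]) (by
      rintro r (rfl | rfl | rfl) <;> decide)
  have : f (of 0) = 1 := by rw [h, map_one]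
  exact absurd this (by rw [toGroup.of]; decide)

theorem isOfFinOrder_of_and_mul (i : Fin 3) :
    IsOfFinOrder (of i : piGroup) ∧ IsOfFinOrder (of 0 * of i : piGroup) := by
  have ha : IsOfFinOrder (of 0 : piGroup) := isOfFinOrder_iff_pow_eq_one.2 ⟨2, two_pos, of_zero_sq⟩
  rcases eq_or_ne i 0 with rfl | hi
  · exact ⟨ha, by rw [← sq]; exact ha.pow⟩
  · have hconj := conj_of_eq_sq hi
    exact ⟨isOfFinOrder_iff_pow_eq_one.2
        ⟨3, three_pos, pow_three_eq_one_of_conj_eq_sq of_zero_sq hconj⟩,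
      isOfFinOrder_iff_pow_eq_one.2 ⟨2, two_pos, mul_sq_eq_one_of_conj_eq_sq of_zero_sq hconj⟩⟩

end piGroup

/-- π = S₃ *_{Z/2Z} S₃ is indecomposable as a free product: if π ≅ G * H then
G or H is trivial. -/
theorem piGroup_indecomposable (G H : Type*) [Group G] [Group H]
    (h : Nonempty (piGroup ≃* Coprod G H)) :
    Subsingleton G ∨ Subsingleton H := by
  obtain ⟨e⟩ := h
  refine Coprod.subsingleton_or_subsingleton_of_mulEquiv e
    (PresentedGroup.closure_range_of piRels) (piGroup.isOfFinOrder_of_and_mul 0).1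
    piGroup.of_zero_ne_one ?_
  rintro _ ⟨i, rfl⟩
  exact piGroup.isOfFinOrder_of_and_mul i
end

section
/- In the integral group ring ℤ[S_3], where S_3 = ⟨a, b ∣ a² = 1, b³ = 1, aba⁻¹ = b⁻¹⟩, the left annihilator of the element b²a + a − 1 is the principal left ideal generated by (b−1)(ba−1): for h ∈ ℤ[S_3], h(b²a + a − 1) = 0 if and only if h = k(b−1)(ba−1) for some k ∈ ℤ[S_3]. -/
/-!
Write `A = a`, `B = b`, `N = 1 + B + B²`. The relations `A² = 1`, `B³ = 1`, `AB = B²A` alone give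
`(BA - 1)(B²A + A - 1) = N(1 - A)`, which `B - 1` kills since `(B - 1)N = B³ - 1`, and they show
that `h(B²A + A - 1) = 0` forces `h = h(A - B²)` and `hN = 0`. The one input from the group ring is
that over `ℤ` the left annihilator of `N` is generated by `B - 1`: sending every group element to a
fixed representative of its coset `g⟨b⟩` maps `hN` to `3` times the image of `h`, so that image
vanishes, while `g - rep(g)` is a left multiple of `b - 1`. Hence `h = z(B - 1)`, and then
`h = z(B - 1)(A - B²) = zB²(B - 1)(BA - 1)`.
-/

abbrev S3 := Equiv.Perm (Fin 3)

abbrev ZS3 := MonoidAlgebra ℤ S3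

noncomputable def og (g : S3) : ZS3 := MonoidAlgebra.of ℤ S3 g

open Finset

namespace MonoidAlgebra

section Semiring
variable {k G : Type*} [Semiring k] [Group G] {b : G}

theorem mapDomain_mul_of_pow {r : G → G} (hr : ∀ (g : G) (i : ℕ), r (g * b ^ i) = r g)
    (x : k[G]) (i : ℕ) : mapDomain r (x * of k G b ^ i) = mapDomain r x := by
  induction x using induction_linear with
  | zero => simp
  | add x y hx hy => rw [add_mul, mapDomain_add, mapDomain_add, hx, hy]
  | single g c => simp [mapDomain_single, hr]

end Semiring

variable {k G : Type*} [Ring k] [Group G] {b : G}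

theorem exists_sub_mapDomain_eq_mul_of_sub_one {r : G → G} (hr : ∀ g, ∃ e : ℕ, r g * b ^ e = g)
    (x : k[G]) : ∃ z, x - mapDomain r x = z * (of k G b - 1) := by
  induction x using induction_linear with
  | zero => exact ⟨0, by simp [mapDomain_zero]⟩
  | add x y hx hy =>
    obtain ⟨z, hz⟩ := hx
    obtain ⟨w, hw⟩ := hy
    exact ⟨z + w, by rw [mapDomain_add, add_mul, ← hz, ← hw]; abel⟩
  | single g c =>
    obtain ⟨e, he⟩ := hr g
    refine ⟨single (r g) c * ∑ j ∈ range e, of k G b ^ j, ?_⟩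
    rw [mul_assoc, geom_sum_mul, mul_sub, ← map_pow]
    simp [mapDomain_single, he]

theorem exists_eq_mul_of_sub_one_of_mul_geom_sum_eq_zero [IsAddTorsionFree k] {n : ℕ}
    (hn : n ≠ 0) (hb : b ^ n = 1) {h : k[G]} (hh : h * ∑ i ∈ range n, of k G b ^ i = 0) :
    ∃ z, h = z * (of k G b - 1) := by
  let r : G → G := fun g ↦ (g : G ⧸ Subgroup.zpowers b).out
  have hr_mul (g : G) (i : ℕ) : r (g * b ^ i) = r g :=
    congrArg Quotient.out (QuotientGroup.eq.2 (by simp))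
  have hr (g : G) : ∃ e : ℕ, r g * b ^ e = g := by
    obtain ⟨e, he : b ^ e = _⟩ : (r g)⁻¹ * g ∈ Submonoid.powers b :=
      (isOfFinOrder_iff_pow_eq_one.2 ⟨n, Nat.pos_of_ne_zero hn, hb⟩).mem_powers_iff_mem_zpowers.2
        (QuotientGroup.eq.1 (QuotientGroup.out_eq' _))
    exact ⟨e, by rw [he, mul_inv_cancel_left]⟩
  have hsum (m : ℕ) : mapDomain r (∑ i ∈ range m, h * of k G b ^ i) = m • mapDomain r h := by
    induction m with
    | zero => simp [mapDomain_zero]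
    | succ m ih => rw [sum_range_succ, mapDomain_add, ih, mapDomain_mul_of_pow hr_mul, succ_nsmul]
  have hnr : n • mapDomain r h = 0 := by
    rw [← hsum, ← mul_sum, hh, mapDomain_zero]
  have hrh : mapDomain r h = 0 := by
    ext g
    exact nsmul_right_injective hn (by simp only [← coeff_smul_apply, hnr, smul_zero])
  obtain ⟨z, hz⟩ := exists_sub_mapDomain_eq_mul_of_sub_one hr h
  exact ⟨z, by rw [← hz, hrh, sub_zero]⟩

end MonoidAlgebra

section Relations
variable {R : Type*} [Ring R] {A B : R}

theorem mul_sq_eq_mul_of_mul_eq_sq_mul (hB : B ^ 3 = 1) (hAB : A * B = B ^ 2 * A) :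
    A * B ^ 2 = B * A :=
  calc A * B ^ 2 = A * B * B := by rw [sq, mul_assoc]
    _ = B ^ 3 * (B * A) := by rw [hAB, mul_assoc, hAB]; noncomm_ring
    _ = B * A := by rw [hB, one_mul]

theorem mul_self_one_add_sq_mul (hA : A * A = 1) (hB : B ^ 3 = 1) (hAB : A * B = B ^ 2 * A) :
    (1 + B ^ 2) * A * ((1 + B ^ 2) * A) = 1 + ∑ i ∈ range 3, B ^ i :=
  calc (1 + B ^ 2) * A * ((1 + B ^ 2) * A) = (1 + B ^ 2) * (A * A + A * B ^ 2 * A) := by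
        noncomm_ring
    _ = 1 + B + B ^ 2 + B ^ 3 := by
      rw [mul_sq_eq_mul_of_mul_eq_sq_mul hB hAB, mul_assoc, hA]; noncomm_ring
    _ = 1 + ∑ i ∈ range 3, B ^ i := by
      simp only [hB, sum_range_succ, sum_range_zero]; noncomm_ring

theorem mul_sub_one_mul_eq_geom_sum_mul (hA : A * A = 1) (hB : B ^ 3 = 1)
    (hAB : A * B = B ^ 2 * A) :
    (B * A - 1) * (B ^ 2 * A + A - 1) = (∑ i ∈ range 3, B ^ i) * (1 - A) :=
  calc (B * A - 1) * (B ^ 2 * A + A - 1)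
      = B * (A * B ^ 2) * A + B * (A * A) - B * A - B ^ 2 * A - A + 1 := by noncomm_ring
    _ = B ^ 2 * (A * A) + B * (A * A) - B * A - B ^ 2 * A - A + 1 := by
      rw [mul_sq_eq_mul_of_mul_eq_sq_mul hB hAB]; noncomm_ring
    _ = (∑ i ∈ range 3, B ^ i) * (1 - A) := by
      simp only [sum_range_succ, sum_range_zero, hA]; noncomm_ring

variable {h : R}

theorem mul_sub_sq_eq_self_of_mul_eq_zero (hA : A * A = 1) (hh : h * (B ^ 2 * A + A - 1) = 0) :
    h * (A - B ^ 2) = h :=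
  calc h * (A - B ^ 2) = h - h * (B ^ 2 * (A * A) + A * A - A) := by rw [hA]; noncomm_ring
    _ = h - h * (B ^ 2 * A + A - 1) * A := by noncomm_ring
    _ = h := by rw [hh, zero_mul, sub_zero]

theorem mul_geom_sum_eq_zero_of_mul_eq_zero (hA : A * A = 1) (hB : B ^ 3 = 1)
    (hAB : A * B = B ^ 2 * A) (hh : h * (B ^ 2 * A + A - 1) = 0) :
    h * ∑ i ∈ range 3, B ^ i = 0 := by
  have hT : h * ((1 + B ^ 2) * A) = h := by
    rw [← sub_eq_zero, ← hh]; noncomm_ring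
  calc h * ∑ i ∈ range 3, B ^ i = h * ((1 + B ^ 2) * A * ((1 + B ^ 2) * A)) - h := by
        rw [mul_self_one_add_sq_mul hA hB hAB, mul_add, mul_one, add_sub_cancel_left]
    _ = 0 := by rw [← mul_assoc, hT, hT, sub_self]

theorem mul_eq_zero_iff_exists_eq_mul (hA : A * A = 1) (hB : B ^ 3 = 1) (hAB : A * B = B ^ 2 * A)
    (hN : ∀ x : R, x * ∑ i ∈ range 3, B ^ i = 0 → ∃ z, x = z * (B - 1)) :
    h * (B ^ 2 * A + A - 1) = 0 ↔ ∃ k, h = k * ((B - 1) * (B * A - 1)) := by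
  constructor
  · intro hh
    obtain ⟨z, rfl⟩ := hN h (mul_geom_sum_eq_zero_of_mul_eq_zero hA hB hAB hh)
    refine ⟨z * B ^ 2, ?_⟩
    calc z * (B - 1) = z * (B - 1) * (A - B ^ 2) := (mul_sub_sq_eq_self_of_mul_eq_zero hA hh).symm
      _ = z * (B - 1) * (B ^ 3 * A - B ^ 2) := by rw [hB, one_mul]
      _ = z * B ^ 2 * ((B - 1) * (B * A - 1)) := by noncomm_ring
  · rintro ⟨k, rfl⟩
    rw [mul_assoc, mul_assoc, mul_sub_one_mul_eq_geom_sum_mul hA hB hAB, ← mul_assoc (B - 1),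
      mul_geom_sum, hB, sub_self, zero_mul, mul_zero]

end Relations

theorem mul_eq_sq_mul_of_mul_mul_inv_eq_inv {G : Type*} [Group G] {a b : G} (hb : b ^ 3 = 1)
    (hab : a * b * a⁻¹ = b⁻¹) : a * b = b ^ 2 * a := by
  have hb' : b⁻¹ = b ^ 2 := inv_eq_of_mul_eq_one_right (by rw [← pow_succ', hb])
  calc a * b = a * b * a⁻¹ * a := (inv_mul_cancel_right _ _).symm
    _ = b ^ 2 * a := by rw [hab, hb']

theorem left_annihilator_b2a_add_a_sub_one_general (a b : S3) (ha : a ^ 2 = 1) (hb : b ^ 3 = 1)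
    (hab : a * b * a⁻¹ = b⁻¹) (h : ZS3) :
    h * (og (b ^ 2) * og a + og a - 1) = 0 ↔
      ∃ k : ZS3, h = k * ((og b - 1) * (og b * og a - 1)) := by
  simp only [og]
  rw [map_pow]
  refine mul_eq_zero_iff_exists_eq_mul ?_ ?_ ?_ ?_
  · rw [← map_mul, ← sq, ha, map_one]
  · rw [← map_pow, hb, map_one]
  · rw [← map_mul, ← map_pow, ← map_mul, mul_eq_sq_mul_of_mul_mul_inv_eq_inv hb hab]
  · exact fun x ↦ MonoidAlgebra.exists_eq_mul_of_sub_one_of_mul_geom_sum_eq_zero three_ne_zero hb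

/-- In ℤ[S₃] with S₃ = ⟨a, b ∣ a² = 1, b³ = 1, aba⁻¹ = b⁻¹⟩, the left annihilator of
b²a + a − 1 is the principal left ideal generated by (b−1)(ba−1). -/
theorem left_annihilator_b2a_add_a_sub_one (a b : S3) (ha : a ^ 2 = 1) (hb : b ^ 3 = 1)
    (hab : a * b * a⁻¹ = b⁻¹) (hgen : Subgroup.closure {a, b} = ⊤) (h : ZS3) :
    h * (og (b ^ 2) * og a + og a - 1) = 0 ↔
      ∃ k : ZS3, h = k * ((og b - 1) * (og b * og a - 1)) :=
  left_annihilator_b2a_add_a_sub_one_general a b ha hb hab h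
end

section
/- In ℤ[S_3] with S_3 = ⟨a, b ∣ a²=1, b³=1, aba=b²⟩, let ν = Σ_{s∈S_3} s be the sum of all six group elements and β = 1 + b + b². Then ν = β(a+1), and for h ∈ ℤ[S_3]: h(a−1) = 0 and h(b²a − ba − b + 1) = 0 if and only if h = mν for some integer m. -/
/-- ν = Σ_{s ∈ S₃} s, the sum of all six group elements. -/
noncomputable def nu : ZS3 := ∑ s : S3, og s

theorem Subgroup.isMulCommutative_of_closure_pair_eq_top {G : Type*} [Group G] {a b : G}
    (h : Subgroup.closure {a, b} = ⊤) (hab : Commute a b) : IsMulCommutative G := by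
  have := Subgroup.isMulCommutative_closure (k := {a, b}) (by
    rintro x (rfl | rfl) y (rfl | rfl) <;> first | rfl | exact hab | exact hab.symm)
  refine ⟨⟨fun x y => ?_⟩⟩
  have hx : x ∈ Subgroup.closure {a, b} := h ▸ Subgroup.mem_top x
  have hy : y ∈ Subgroup.closure {a, b} := h ▸ Subgroup.mem_top y
  exact congrArg Subtype.val (this.is_comm.comm ⟨x, hx⟩ ⟨y, hy⟩)

theorem injective_pow_mul_pow {G : Type*} [Group G] {a b : G} (hb : b ^ 3 = 1)
    (hab : ¬ Commute a b) :
    Function.Injective fun p : Fin 3 × Fin 2 => b ^ (p.1 : ℕ) * a ^ (p.2 : ℕ) := by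
  have hob : orderOf b = 3 := orderOf_eq_prime hb fun h => hab (h ▸ Commute.one_right a)
  have hmixed (i i' : ℕ) : b ^ i ≠ b ^ i' * a := fun h => by
    rw [← inv_mul_eq_iff_eq_mul] at h
    exact hab <| h ▸ (Commute.pow_self b i').inv_left.mul_left (Commute.pow_self b i)
  rintro ⟨i, j⟩ ⟨i', j'⟩ h
  have hi : b ^ (i : ℕ) = b ^ (i' : ℕ) → i = i' := fun h => by
    rw [pow_eq_pow_iff_modEq, hob] at h
    exact Fin.ext (Nat.ModEq.eq_of_lt_of_lt h i.isLt i'.isLt)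
  fin_cases j <;> fin_cases j' <;> simp only [pow_zero, pow_one, mul_one, mul_left_inj] at h
  · rw [hi h]
  · exact absurd h (hmixed _ _)
  · exact absurd h.symm (hmixed _ _)
  · rw [hi h]

namespace MonoidAlgebra
variable {k G : Type*} [Semiring k]

theorem sum_of_eq_mul_of_bijective [Monoid G] [Fintype G] {ι κ : Type*} [Fintype ι] [Fintype κ]
    {u : ι → G} {v : κ → G} (huv : Function.Bijective fun p : ι × κ => u p.1 * v p.2) :
    ∑ g, of k G g = (∑ i, of k G (u i)) * ∑ j, of k G (v j) := by
  rw [← huv.sum_comp, Finset.sum_mul_sum, ← Finset.univ_product_univ, Finset.sum_product]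
  simp only [map_mul]

variable [Group G]

theorem sum_of_mul_of [Fintype G] (g : G) : (∑ s, of k G s) * of k G g = ∑ s, of k G s := by
  simp only [Finset.sum_mul, ← map_mul]
  exact Fintype.sum_equiv (Equiv.mulRight g) _ _ fun _ => rfl

theorem mul_of_eq_self_of_closure_eq_top {s : Set G} (hs : Subgroup.closure s = ⊤) {h : k[G]}
    (hh : ∀ g ∈ s, h * of k G g = h) (g : G) : h * of k G g = h := by
  have hg : g ∈ Subgroup.closure s := hs ▸ Subgroup.mem_top g
  induction hg using Subgroup.closure_induction with
  | mem x hx => exact hh x hx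
  | one => rw [map_one, mul_one]
  | mul x y _ _ hx hy => rw [map_mul, ← mul_assoc, hx, hy]
  | inv x _ hx => rw [← hx, mul_assoc, ← map_mul, mul_inv_cancel, map_one, mul_one, hx]

theorem eq_smul_sum_of_of_forall_mul_of_eq_self [Fintype G] {h : k[G]}
    (hh : ∀ g, h * of k G g = h) : h = h.coeff 1 • ∑ s, of k G s := by
  ext x
  conv_rhs => rw [← hh x⁻¹]
  simp [coeff_sum]

end MonoidAlgebra

theorem mul_eq_self_of_mul_eq_self_of_mul_eq_zero {R : Type*} [Ring R] {h A B : R}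
    (hA2 : A ^ 2 = 1) (hB3 : B ^ 3 = 1) (hAB : A * B * A = B ^ 2) (hA : h * A = h)
    (hrel : h * (B ^ 2 * A - B * A - B + 1) = 0) : h * B = h := by
  have hAA : A * A = 1 := by rw [← sq, hA2]
  have hB2A : h * B ^ 2 * A = h * B ^ 2 := by
    rw [← sub_eq_zero]
    -- the relation minus its right translate by `A`, up to multiples of `A * A - 1` and `h * A - h`
    calc h * B ^ 2 * A - h * B ^ 2
        = h * (B ^ 2 * A - B * A - B + 1) - h * (B ^ 2 * A - B * A - B + 1) * A + (h * A - h)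
          + h * B ^ 2 * (A * A - 1) - h * B * (A * A - 1) := by noncomm_ring
      _ = 0 := by rw [hrel, hA, hAA]; simp
  have hB4 : B ^ 2 * B ^ 2 = B := by
    rw [← pow_add, show 2 + 2 = 3 + 1 from rfl, pow_succ, hB3, one_mul]
  have hBA : h * B * A = h :=
    calc h * B * A = h * (B ^ 2 * B ^ 2) * A := by rw [hB4]
      _ = h * B ^ 2 * A * B * (A * A) := by rw [← hAB]; simp only [mul_assoc]
      _ = h * B ^ 2 * B := by rw [hAA, mul_one, hB2A]
      _ = h := by rw [mul_assoc, ← pow_succ, hB3, mul_one]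
  calc h * B = h * B * A * A := by rw [mul_assoc _ A, hAA, mul_one]
    _ = h := by rw [hBA, hA]

theorem nu_eq_of_not_commute {a b : S3} (hb : b ^ 3 = 1) (hab : ¬ Commute a b) :
    nu = (1 + og b + og (b ^ 2)) * (og a + 1) := by
  have hbij : Function.Bijective fun p : Fin 3 × Fin 2 => b ^ (p.1 : ℕ) * a ^ (p.2 : ℕ) :=
    (Fintype.bijective_iff_injective_and_card _).mpr ⟨injective_pow_mul_pow hb hab, rfl⟩
  simp only [nu, og]
  rw [MonoidAlgebra.sum_of_eq_mul_of_bijective (u := fun i : Fin 3 => b ^ (i : ℕ))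
    (v := fun j : Fin 2 => a ^ (j : ℕ)) hbij]
  simp only [Fin.sum_univ_three, Fin.sum_univ_two, Fin.val_zero, Fin.val_one, Fin.val_two,
    pow_zero, pow_one, map_one, add_comm _ (1 : ZS3)]

theorem nu_mul_og (g : S3) : nu * og g = nu :=
  MonoidAlgebra.sum_of_mul_of g

/-- In ℤ[S₃] with S₃ = ⟨a, b ∣ a²=1, b³=1, aba=b²⟩, with β = 1 + b + b² one has
ν = β(a+1); moreover h(a−1) = 0 and h(b²a − ba − b + 1) = 0 iff h = mν for some m ∈ ℤ. -/
theorem nu_eq_and_annihilator (a b : S3) (ha : a ^ 2 = 1) (hb : b ^ 3 = 1)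
    (hab : a * b * a = b ^ 2) (hgen : Subgroup.closure {a, b} = ⊤) :
    nu = (1 + og b + og (b ^ 2)) * (og a + 1) ∧
    ∀ h : ZS3,
      (h * (og a - 1) = 0 ∧
       h * (og (b ^ 2) * og a - og b * og a - og b + 1) = 0) ↔
      ∃ m : ℤ, h = m • nu := by
  have hncomm : ¬ Commute a b := fun hc =>
    (by simp [Equiv.Perm.isMulCommutative_iff_card_le_two] : ¬ IsMulCommutative S3)
      (Subgroup.isMulCommutative_of_closure_pair_eq_top hgen hc)
  refine ⟨nu_eq_of_not_commute hb hncomm, fun h => ⟨fun ⟨h1, h2⟩ => ?_, ?_⟩⟩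
  · have hA : h * og a = h := by rwa [mul_sub, mul_one, sub_eq_zero] at h1
    have hB : h * og b = h := by
      simp only [og, map_pow] at hA h2 ⊢
      exact mul_eq_self_of_mul_eq_self_of_mul_eq_zero (by rw [← map_pow, ha, map_one])
        (by rw [← map_pow, hb, map_one]) (by rw [← map_mul, ← map_mul, hab, map_pow]) hA h2
    refine ⟨h.coeff 1, MonoidAlgebra.eq_smul_sum_of_of_forall_mul_of_eq_self
      (MonoidAlgebra.mul_of_eq_self_of_closure_eq_top hgen ?_)⟩
    rintro g (rfl | rfl)
    exacts [hA, hB]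
  · rintro ⟨m, rfl⟩
    simp only [smul_mul_assoc, mul_add, mul_sub, mul_one, ← mul_assoc, nu_mul_og]
    simp
end

section
/- In ℤ[S_3] with S_3 = ⟨a, b ∣ a²=1, b³=1, aba=b²⟩, for all p, q ∈ ℤ[B] (the span of 1, b, b²), setting x = p(ba + b + 1) + q(ba + b), one has x(a−1) = p(a−1) and x(−b²a + ba + b − 1) = q(b−1)(ba−1). -/
/-- In ℤ[S₃] with S₃ = ⟨a, b ∣ a²=1, b³=1, aba=b²⟩, for all p, q in the span ℤ[B] of
1, b, b², setting x = p(ba + b + 1) + q(ba + b), one has x(a−1) = p(a−1) and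
x(−b²a + ba + b − 1) = q(b−1)(ba−1). -/
theorem boundary_identities (a b : S3) (ha : a ^ 2 = 1) (hb : b ^ 3 = 1)
    (hab : a * b * a = b ^ 2) (hgen : Subgroup.closure {a, b} = ⊤)
    (p q : ZS3) (hp : p ∈ Submodule.span ℤ ({1, og b, og (b ^ 2)} : Set ZS3))
    (hq : q ∈ Submodule.span ℤ ({1, og b, og (b ^ 2)} : Set ZS3)) :
    (p * (og b * og a + og b + 1) + q * (og b * og a + og b)) * (og a - 1)
        = p * (og a - 1) ∧
    (p * (og b * og a + og b + 1) + q * (og b * og a + og b)) *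
        (-(og (b ^ 2) * og a) + og b * og a + og b - 1)
        = q * ((og b - 1) * (og b * og a - 1)) := by
  have ha' : a * a = 1 := by rw [← sq]; exact ha
  have hb' : b * (b * b) = 1 := by simpa [pow_succ, mul_assoc] using hb
  have hab' : a * b = b * (b * a) := by
    have h : a * b * a * a = b ^ 2 * a := by rw [hab]
    simpa [mul_assoc, ha', sq] using h
  have w1 : ∀ x : S3, a * (a * x) = x := fun x => by rw [← mul_assoc, ha', one_mul]
  have w2 : ∀ x : S3, b * (b * (b * x)) = x := by
    intro x; rw [← mul_assoc, ← mul_assoc, mul_assoc b b b, hb', one_mul]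
  have w3 : ∀ x : S3, a * (b * x) = b * (b * (a * x)) := fun x => by
    rw [← mul_assoc, hab', mul_assoc, mul_assoc]
  have hbsq : og (b ^ 2) = og b * og b := by
    simp only [og, sq, map_mul]
  have e1 : (og b * og a + og b + 1) * (og a - 1) = og a - 1 := by
    simp only [add_mul, mul_sub, mul_one, one_mul, mul_assoc, og, ← map_mul]
    simp only [ha', hb', hab', w1, w2, w3, mul_assoc, mul_one, map_one]
    abel
  have e2 : (og b * og a + og b) * (og a - 1) = 0 := by
    simp only [add_mul, mul_sub, mul_one, one_mul, mul_assoc, og, ← map_mul]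
    simp only [ha', hb', hab', w1, w2, w3, mul_assoc, mul_one, map_one]
    abel
  have e3 : (og b * og a + og b + 1) *
      (-(og b * (og b * og a)) + og b * og a + og b - 1) = 0 := by
    simp only [add_mul, mul_sub, mul_add, mul_neg, mul_one, one_mul, mul_assoc, og, ← map_mul]
    simp only [ha', hb', hab', w1, w2, w3, mul_assoc, mul_one, map_one]
    abel
  have e4 : (og b * og a + og b) *
      (-(og b * (og b * og a)) + og b * og a + og b - 1)
      = (og b - 1) * (og b * og a - 1) := by
    simp only [add_mul, sub_mul, mul_sub, mul_add, mul_neg, mul_one, one_mul, mul_assoc,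
      og, ← map_mul]
    simp only [ha', hb', hab', w1, w2, w3, mul_assoc, mul_one, map_one]
    abel
  constructor
  · rw [add_mul, mul_assoc, mul_assoc, e1, e2, mul_zero, add_zero]
  · rw [hbsq, mul_assoc (og b) (og b) (og a), add_mul, mul_assoc p, mul_assoc q, e3, e4, mul_zero, zero_add]
end

section
/- In ℤ[S_3] with S_3 = ⟨a, b ∣ a²=1, b³=1, aba=b²⟩, the change of basis e₁ = (1,0), e₂ = (−ba−b², 1) in ℤ[S_3]² and f₁ = (1,0), f₂ = (0,−a) diagonalizes the differential ∂₂ defined by ∂₂(1,0) = (a+1, 0), ∂₂(0,1) = (b²a+1, a−b−1): namely ∂₂f₁ = (a+1)e₁ and ∂₂f₂ = (b²a + a − 1)e₂. -/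
lemma og_mul (x y : S3) : og x * og y = og (x * y) := (map_mul (MonoidAlgebra.of ℤ S3) x y).symm
lemma og_one : og 1 = 1 := map_one (MonoidAlgebra.of ℤ S3)

/-- In ℤ[S₃] with S₃ = ⟨a, b ∣ a²=1, b³=1, aba=b²⟩, the change of basis
e₁ = (1,0), e₂ = (−ba−b², 1), f₁ = (1,0), f₂ = (0,−a) diagonalizes the left-module
homomorphism ∂₂ with ∂₂(1,0) = (a+1, 0) and ∂₂(0,1) = (b²a+1, a−b−1):
namely ∂₂f₁ = (a+1)e₁ and ∂₂f₂ = (b²a + a − 1)e₂. -/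
theorem d2_diagonalized (a b : S3) (ha : a ^ 2 = 1) (hb : b ^ 3 = 1)
    (hab : a * b * a = b ^ 2) (hgen : Subgroup.closure {a, b} = ⊤) :
    ∀ d2 : (ZS3 × ZS3) → (ZS3 × ZS3),
      (∀ x y : ZS3, d2 (x, y) =
        (x * (og a + 1) + y * (og (b ^ 2) * og a + 1), y * (og a - og b - 1))) →
      d2 ((1 : ZS3), (0 : ZS3)) = (og a + 1) • (((1 : ZS3), (0 : ZS3))) ∧
      d2 ((0 : ZS3), -og a) =
        (og (b ^ 2) * og a + og a - 1) • ((-(og b * og a) - og (b ^ 2), (1 : ZS3))) := by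
  intro d2 hd2
  have haa : a * a = 1 := by rw [← pow_two]; exact ha
  have h4 : b ^ 2 * b ^ 2 = b := by
    rw [← pow_add, show (2+2) = 3+1 from rfl, pow_add, hb, one_mul, pow_one]
  have hab2 : a * b = b ^ 2 * a := by
    calc a * b = a * b * a * a := by rw [mul_assoc (a*b), haa, mul_one]
    _ = b ^ 2 * a := by rw [hab]
  have hab2' : a * b ^ 2 = b * a := by
    calc a * b ^ 2 = a * b * b := by rw [pow_two, mul_assoc]
    _ = b ^ 2 * a * b := by rw [hab2]
    _ = b ^ 2 * (a * b) := by rw [mul_assoc]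
    _ = b ^ 2 * (b ^ 2 * a) := by rw [hab2]
    _ = b ^ 2 * b ^ 2 * a := by rw [mul_assoc]
    _ = b * a := by rw [h4]
  have e3 : a * (b * a) = b ^ 2 := by rw [← mul_assoc, hab]
  have e5 : a * (b ^ 2 * a) = b := by
    rw [← mul_assoc, hab2', mul_assoc, haa, mul_one]
  have e1 : b ^ 2 * a * (b * a) = b := by rw [mul_assoc, e3, h4]
  have e2 : b ^ 2 * a * b ^ 2 = a := by
    rw [mul_assoc, hab2', ← mul_assoc, ← pow_succ, hb, one_mul]
  constructor
  · rw [hd2]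
    simp [Prod.smul_mk, smul_eq_mul]
  · rw [hd2]
    have key1 : (0:ZS3) * (og a + 1) + (-og a) * (og (b ^ 2) * og a + 1)
        = (og (b ^ 2) * og a + og a - 1) * (-(og b * og a) - og (b ^ 2)) := by
      simp only [zero_mul, zero_add, neg_mul, mul_add, mul_one, add_mul, sub_mul, one_mul,
        mul_neg, mul_sub, neg_sub, neg_neg, og_mul]
      rw [e1, e2, e3, hab2', e5]
      abel
    have key2 : (-og a) * (og a - og b - 1)
        = (og (b ^ 2) * og a + og a - 1) * 1 := by
      simp only [neg_mul, mul_sub, mul_one, og_mul, haa, og_one, neg_sub, hab2]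
      abel
    simp only [Prod.smul_mk, smul_eq_mul, Prod.mk.injEq]
    exact ⟨key1, key2⟩
end

section
/- Let R = ℤ[a]/(a² − 1). The R-modules R/(a+1) ⊕ (R/(a+1,3))² and R/(a−1) ⊕ (R/(a−1,3))² are not isomorphic, even up to projective (free) direct summands: there do not exist finitely generated free R-modules F₁, F₂ with R/(a+1) ⊕ (R/(a+1,3))² ⊕ F₁ ≅ R/(a−1) ⊕ (R/(a−1,3))² ⊕ F₂. -/
open Polynomial

/-- R = ℤ[a]/(a² − 1) = ℤ[Z/2Z]. -/
abbrev Rring := ℤ[X] ⧸ Ideal.span ({X ^ 2 - 1} : Set ℤ[X])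

/-- The image of a in R. -/
noncomputable def av : Rring := Ideal.Quotient.mk _ X

/-- M₁ = R/(a+1) ⊕ (R/(a+1,3))². -/
abbrev M1 :=
  (Rring ⧸ Ideal.span ({av + 1} : Set Rring)) ×
  (Rring ⧸ Ideal.span ({av + 1, 3} : Set Rring)) ×
  (Rring ⧸ Ideal.span ({av + 1, 3} : Set Rring))

/-- M₂ = R/(a−1) ⊕ (R/(a−1,3))². -/
abbrev M2 :=
  (Rring ⧸ Ideal.span ({av - 1} : Set Rring)) ×
  (Rring ⧸ Ideal.span ({av - 1, 3} : Set Rring)) ×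
  (Rring ⧸ Ideal.span ({av - 1, 3} : Set Rring))

noncomputable abbrev mkR : ℤ[X] →+* Rring := Ideal.Quotient.mk _

lemma mkR_three : (3 : Rring) = mkR (3 : ℤ[X]) := (map_ofNat _ 3).symm

lemma av_sub_one : av - 1 = mkR (X - 1 : ℤ[X]) := by simp [av]

lemma av_add_one : av + 1 = mkR (X + 1 : ℤ[X]) := by simp [av]

/-- Rring is 3-torsion-free. -/
lemma three_torsion_free_R (r : Rring) (h : (3 : Rring) • r = 0) : r = 0 := by
  obtain ⟨p, rfl⟩ := Ideal.Quotient.mk_surjective r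
  rw [smul_eq_mul, mkR_three, ← map_mul, Ideal.Quotient.eq_zero_iff_mem,
    Ideal.mem_span_singleton] at h
  rw [Ideal.Quotient.eq_zero_iff_mem, Ideal.mem_span_singleton]
  have hm : (X ^ 2 - 1 : ℤ[X]).Monic := by
    have := monic_X_pow_sub_C (1 : ℤ) (n := 2) (by norm_num)
    simpa using this
  rw [← modByMonic_eq_zero_iff_dvd hm] at h ⊢
  have h3 : (3 : ℤ[X]) * p = (3 : ℤ) • p := by
    rw [zsmul_eq_mul]; norm_num
  rw [h3, smul_modByMonic] at h
  have := smul_eq_zero.mp h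
  rcases this with h' | h'
  · exact absurd h' (by norm_num)
  · exact h'

/-- R/(a-1) is 3-torsion-free. -/
lemma three_torsion_free_q1 (z : Rring ⧸ Ideal.span ({av - 1} : Set Rring))
    (h : (3 : Rring) • z = 0) : z = 0 := by
  obtain ⟨r, rfl⟩ := Ideal.Quotient.mk_surjective z
  obtain ⟨p, rfl⟩ := Ideal.Quotient.mk_surjective r
  have hmap : (Ideal.span ({av - 1} : Set Rring)) =
      Ideal.map mkR (Ideal.span ({X - 1} : Set ℤ[X])) := by
    rw [Ideal.map_span, Set.image_singleton, av_sub_one]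
  have hsmul : (3 : Rring) • (Ideal.Quotient.mk (Ideal.span ({av - 1} : Set Rring)) (mkR p))
      = Ideal.Quotient.mk _ ((3 : Rring) * mkR p) := rfl
  rw [hsmul, Ideal.Quotient.eq_zero_iff_mem, mkR_three, ← map_mul, hmap,
    Ideal.mem_quotient_iff_mem_sup] at h
  rw [Ideal.Quotient.eq_zero_iff_mem, hmap, Ideal.mem_quotient_iff_mem_sup]
  -- collapse the sup: X^2 - 1 ∈ span {X - 1}
  have hle : Ideal.span ({X ^ 2 - 1} : Set ℤ[X]) ≤ Ideal.span ({X - 1} : Set ℤ[X]) := by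
    rw [Ideal.span_le, Set.singleton_subset_iff]
    rw [SetLike.mem_coe, Ideal.mem_span_singleton]
    exact ⟨X + 1, by ring⟩
  rw [sup_eq_left.mpr hle] at h ⊢
  rw [Ideal.mem_span_singleton] at h ⊢
  have h1 : (X - C (1 : ℤ)) ∣ 3 * p := by simpa using h
  rw [dvd_iff_isRoot] at h1
  have h2 : (X - C (1 : ℤ)) ∣ p := by
    rw [dvd_iff_isRoot]
    simp only [IsRoot, eval_mul, eval_ofNat] at h1 ⊢
    omega
  simpa using h2

/-- In R/(a-1,3), an element killed by (a+1) is zero. -/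
lemma torsion_q2 (z : Rring ⧸ Ideal.span ({av - 1, 3} : Set Rring))
    (h : (av + 1) • z = 0) : z = 0 := by
  obtain ⟨r, rfl⟩ := Ideal.Quotient.mk_surjective z
  have hsmul : (av + 1) • (Ideal.Quotient.mk (Ideal.span ({av - 1, 3} : Set Rring)) r)
      = Ideal.Quotient.mk _ ((av + 1) * r) := rfl
  rw [hsmul, Ideal.Quotient.eq_zero_iff_mem] at h
  rw [Ideal.Quotient.eq_zero_iff_mem]
  have h2 : av - 1 ∈ Ideal.span ({av - 1, 3} : Set Rring) :=
    Ideal.subset_span (by simp)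
  have h3 : (3 : Rring) ∈ Ideal.span ({av - 1, 3} : Set Rring) :=
    Ideal.subset_span (by simp)
  have key : r = 2 * ((av + 1) * r) - (av - 1) * (2 * r) - 3 * r := by ring
  rw [key]
  exact sub_mem (sub_mem (Ideal.mul_mem_left _ _ h) (Ideal.mul_mem_right _ _ h2))
    (Ideal.mul_mem_right _ _ h3)

/-- R/(a+1,3) is nontrivial. -/
lemma one_ne_zero_q : (1 : Rring ⧸ Ideal.span ({av + 1, 3} : Set Rring)) ≠ 0 := by
  intro h
  rw [← map_one (Ideal.Quotient.mk (Ideal.span ({av + 1, 3} : Set Rring))),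
    Ideal.Quotient.eq_zero_iff_mem] at h
  have hmap : (Ideal.span ({av + 1, 3} : Set Rring)) =
      Ideal.map mkR (Ideal.span ({X + 1, 3} : Set ℤ[X])) := by
    rw [Ideal.map_span, Set.image_pair, av_add_one, mkR_three]
  rw [hmap, show (1 : Rring) = mkR 1 from (map_one _).symm,
    Ideal.mem_quotient_iff_mem_sup] at h
  set ψ : ℤ[X] →+* ZMod 3 := eval₂RingHom (Int.castRingHom (ZMod 3)) (-1) with hψ
  have hker : Ideal.span ({X + 1, 3} : Set ℤ[X]) ⊔ Ideal.span ({X ^ 2 - 1} : Set ℤ[X])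
      ≤ RingHom.ker ψ := by
    apply sup_le <;> rw [Ideal.span_le] <;> intro q hq
    · simp only [Set.mem_insert_iff, Set.mem_singleton_iff] at hq
      rcases hq with rfl | rfl <;>
        · simp only [SetLike.mem_coe, RingHom.mem_ker, hψ, coe_eval₂RingHom, eval₂_add,
            eval₂_X, eval₂_one, eval₂_ofNat]
          decide
    · simp only [Set.mem_singleton_iff] at hq
      subst hq
      simp only [SetLike.mem_coe, RingHom.mem_ker, hψ, coe_eval₂RingHom, eval₂_sub,
        eval₂_pow, eval₂_X, eval₂_one]
      decide
  have h1 := hker h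
  rw [RingHom.mem_ker, map_one] at h1
  exact one_ne_zero h1

set_option maxHeartbeats 1000000 in
set_option synthInstance.maxHeartbeats 400000 in
/-- The R-modules R/(a+1) ⊕ (R/(a+1,3))² and R/(a−1) ⊕ (R/(a−1,3))² are not
isomorphic even after adding finitely generated free direct summands. -/
theorem modules_not_stably_isomorphic :
    ∀ n m : ℕ, ¬ Nonempty ((M1 × (Fin n → Rring)) ≃ₗ[Rring] (M2 × (Fin m → Rring))) := by
  intro n m ⟨e⟩
  set x : M1 × (Fin n → Rring) := ((0, 1, 0), 0) with hx
  have h3x : (3 : Rring) • x = 0 := by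
    have : (3 : Rring) • (1 : Rring ⧸ Ideal.span ({av + 1, 3} : Set Rring)) = 0 := by
      have : (3 : Rring) • (1 : Rring ⧸ Ideal.span ({av + 1, 3} : Set Rring))
          = Ideal.Quotient.mk _ ((3 : Rring) * 1) := rfl
      rw [this, Ideal.Quotient.eq_zero_iff_mem, mul_one]
      exact Ideal.subset_span (by simp)
    rw [hx]
    simp only [Prod.smul_mk, smul_zero, this]
    rfl
  have hax : (av + 1) • x = 0 := by
    have : (av + 1) • (1 : Rring ⧸ Ideal.span ({av + 1, 3} : Set Rring)) = 0 := by
      have : (av + 1) • (1 : Rring ⧸ Ideal.span ({av + 1, 3} : Set Rring))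
          = Ideal.Quotient.mk _ ((av + 1) * 1) := rfl
      rw [this, Ideal.Quotient.eq_zero_iff_mem, mul_one]
      exact Ideal.subset_span (by simp)
    rw [hx]
    simp only [Prod.smul_mk, smul_zero, this]
    rfl
  set y := e x with hy
  have h3y : (3 : Rring) • y = 0 := by rw [hy, ← e.map_smul, h3x, e.map_zero]
  have hay : (av + 1) • y = 0 := by rw [hy, ← e.map_smul, hax, e.map_zero]
  have hy1 : y.1.1 = 0 := by
    apply three_torsion_free_q1
    have := congrArg (fun p => p.1.1) h3y
    simpa only [Prod.smul_fst, Prod.fst_zero] using this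
  have hy2 : y.1.2.1 = 0 := by
    apply torsion_q2
    have := congrArg (fun p => p.1.2.1) hay
    simpa only [Prod.smul_fst, Prod.smul_snd, Prod.fst_zero, Prod.snd_zero] using this
  have hy3 : y.1.2.2 = 0 := by
    apply torsion_q2
    have := congrArg (fun p => p.1.2.2) hay
    simpa only [Prod.smul_fst, Prod.smul_snd, Prod.fst_zero, Prod.snd_zero] using this
  have hyf : y.2 = 0 := by
    funext i
    apply three_torsion_free_R
    have := congrArg (fun p => p.2 i) h3y
    simpa only [Prod.smul_snd, Prod.snd_zero, Pi.smul_apply, Pi.zero_apply] using this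
  have hy0 : y = 0 := by
    refine Prod.ext (Prod.ext hy1 (Prod.ext hy2 hy3)) hyf
  have hex : e x = 0 := hy ▸ hy0
  have hx0 : x = 0 := by
    have := congrArg e.symm hex
    simpa using this
  have : (1 : Rring ⧸ Ideal.span ({av + 1, 3} : Set Rring)) = 0 := by
    have := congrArg (fun p => p.1.2.1) hx0
    simpa [hx] using this
  exact one_ne_zero_q this
end
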